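/- Let f ∈ k(X)^× be a nonzero function, let g ∈ k[t] be the denominator of f with respect to O_0 (the minimal nonzero polynomial with fg ∈ O_0), and let h ∈ k[t] be a generator of the ideal k[t] ∩ f g O_0. Then every closed point y of P^1 in the support of the zero divisor of g or of the zero divisor of h satisfies y = π(x) for some closed point x ∈ X in the support of div(f); more precisely, if y is a zero of g then there exists x above y with v_x(f) < 0, and if y is a zero of h but not of g then there exists x above y with v_x(f) > 0. -/

import Mathlib

/-!
If no point over `p ∣ g` were a pole of `f`, then `f g / p` would still have no finite poles,
i.e. lie in `O_0`, against the minimality of `g`. Dually, if `p ∣ h`, `p ∤ g` and no point over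
`p` were a zero of `f`, write `h = f g a` with `a ∈ O_0`: at points over `p` the valuation of `g`
vanishes (`p` and `g` are coprime), so `a` vanishes there to order at least that of `p`, hence
`a / p ∈ O_0` and `h / p` already lies in `k[t] ∩ f g O_0`, against `h` generating that ideal.
-/

section Center

variable {A K : Type*} [CommRing A] [Field K] [Algebra A K]

theorem val_one_eq_zero {v : K → ℤ} (hmul : ∀ a b : K, a ≠ 0 → b ≠ 0 → v (a * b) = v a + v b) :
    v 1 = 0 := by
  have := hmul 1 1 one_ne_zero one_ne_zero
  rw [mul_one] at this
  omega

/-- The center on `A` of a valuation `v` of `K` that is nonnegative on `A`; the guard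
`algebraMap A K a ≠ 0 →` keeps the junk value `v 0` out. -/
def valuationCenter (v : K → ℤ) (hmul : ∀ a b : K, a ≠ 0 → b ≠ 0 → v (a * b) = v a + v b)
    (hadd : ∀ a b : K, a ≠ 0 → b ≠ 0 → a + b ≠ 0 → min (v a) (v b) ≤ v (a + b))
    (hA : ∀ q : A, 0 ≤ v (algebraMap A K q)) : Ideal A where
  carrier := {a | algebraMap A K a ≠ 0 → 0 < v (algebraMap A K a)}
  zero_mem' h := absurd (map_zero _) h
  add_mem' {a b} ha hb hab := by
    by_cases ha0 : algebraMap A K a = 0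
    · rw [map_add, ha0, zero_add] at hab ⊢
      exact hb hab
    by_cases hb0 : algebraMap A K b = 0
    · rw [map_add, hb0, add_zero] at hab ⊢
      exact ha hab
    rw [map_add] at hab ⊢
    exact lt_of_lt_of_le (lt_min (ha ha0) (hb hb0)) (hadd _ _ ha0 hb0 hab)
  smul_mem' c a ha hca := by
    rw [smul_eq_mul, map_mul] at hca ⊢
    obtain ⟨hc0, ha0⟩ := mul_ne_zero_iff.1 hca
    rw [hmul _ _ hc0 ha0]
    linarith [hA c, ha ha0]

theorem val_algebraMap_eq_zero_of_isCoprime {v : K → ℤ}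
    (hmul : ∀ a b : K, a ≠ 0 → b ≠ 0 → v (a * b) = v a + v b)
    (hadd : ∀ a b : K, a ≠ 0 → b ≠ 0 → a + b ≠ 0 → min (v a) (v b) ≤ v (a + b))
    (hA : ∀ q : A, 0 ≤ v (algebraMap A K q)) {p q : A} (hpq : IsCoprime p q)
    (hp : 0 < v (algebraMap A K p)) : v (algebraMap A K q) = 0 := by
  set I := valuationCenter v hmul hadd hA
  have one_notMem : (1 : A) ∉ I := fun h ↦ by
    simpa [val_one_eq_zero hmul] using h (by simp)
  have hq : q ∉ I := by
    obtain ⟨u, w, huw⟩ := hpq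
    intro hq
    exact one_notMem (huw ▸ I.add_mem (I.mul_mem_left u fun _ ↦ hp) (I.mul_mem_left w hq))
  refine le_antisymm ?_ (hA q)
  by_contra! hpos
  exact hq fun _ ↦ hpos

end Center

theorem not_mul_dvd_self {M : Type*} [CommMonoidWithZero M] [IsCancelMulZero M] {p a : M} (hp : Irreducible p) (ha : a ≠ 0) : ¬p * a ∣ a :=
  fun h ↦ hp.not_dvd_one ((mul_dvd_mul_iff_right ha).1 (by rwa [one_mul]))

section Denominator

variable {A K Pt : Type*} [CommRing A] [Field K] [Algebra A K]
  {v : Pt → K → ℤ} {T : Set Pt} {O : Subalgebra A K}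

theorem mem_of_mul_algebraMap_mem
    (hmul : ∀ x (a b : K), a ≠ 0 → b ≠ 0 → v x (a * b) = v x a + v x b)
    (hO : ∀ a, a ∈ O ↔ ∀ x ∈ T, 0 ≤ v x a) {b : K} {p : A} (hb : b ≠ 0)
    (hp : algebraMap A K p ≠ 0) (hbp : b * algebraMap A K p ∈ O)
    (hpos : ∀ x ∈ T, 0 < v x (algebraMap A K p) → 0 ≤ v x b) : b ∈ O := by
  refine (hO b).2 fun x hx ↦ ?_
  rcases (hO _).1 (O.algebraMap_mem p) x hx |>.lt_or_eq with hvp | hvp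
  · exact hpos x hx hvp
  · have := (hO _).1 hbp x hx
    rwa [hmul x _ _ hb hp, ← hvp, add_zero] at this

theorem exists_val_neg_of_dvd_denominator [IsDomain A] (halg : Function.Injective (algebraMap A K))
    (hmul : ∀ x (a b : K), a ≠ 0 → b ≠ 0 → v x (a * b) = v x a + v x b)
    (hO : ∀ a, a ∈ O ↔ ∀ x ∈ T, 0 ≤ v x a) {f : K} (hf : f ≠ 0) {g : A} (hg : g ≠ 0)
    (hfg : f * algebraMap A K g ∈ O)
    (hg_min : ∀ g' : A, g' ≠ 0 → f * algebraMap A K g' ∈ O → g ∣ g')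
    {p : A} (hp : Irreducible p) (hpg : p ∣ g) :
    ∃ x ∈ T, 0 < v x (algebraMap A K p) ∧ v x f < 0 := by
  by_contra! hcon
  obtain ⟨g', rfl⟩ := hpg
  have hg' : g' ≠ 0 := right_ne_zero_of_mul hg
  have hφ : ∀ {q : A}, q ≠ 0 → algebraMap A K q ≠ 0 :=
    fun hq ↦ (map_ne_zero_iff _ halg).2 hq
  have hmem : f * algebraMap A K g' ∈ O := by
    refine mem_of_mul_algebraMap_mem hmul hO (mul_ne_zero hf (hφ hg')) (hφ hp.ne_zero)
      (by rwa [mul_assoc, ← map_mul, mul_comm g']) fun x hx hvp ↦ ?_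
    rw [hmul x _ _ hf (hφ hg')]
    linarith [hcon x hx hvp, (hO _).1 (O.algebraMap_mem g') x hx]
  exact not_mul_dvd_self hp hg' (hg_min g' hg' hmem)

theorem exists_val_pos_of_dvd_numerator [IsDomain A] [IsBezout A]
    (halg : Function.Injective (algebraMap A K))
    (hmul : ∀ x (a b : K), a ≠ 0 → b ≠ 0 → v x (a * b) = v x a + v x b)
    (hadd : ∀ x (a b : K), a ≠ 0 → b ≠ 0 → a + b ≠ 0 → min (v x a) (v x b) ≤ v x (a + b))
    (hO : ∀ a, a ∈ O ↔ ∀ x ∈ T, 0 ≤ v x a) {f : K} (hf : f ≠ 0) {g : A} (hg : g ≠ 0)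
    {h : A} (hh : h ≠ 0) (hh_mem : ∃ a ∈ O, algebraMap A K h = f * algebraMap A K g * a)
    (hh_gen : ∀ h' : A, (∃ a ∈ O, algebraMap A K h' = f * algebraMap A K g * a) → h ∣ h')
    {p : A} (hp : Irreducible p) (hph : p ∣ h) (hpg : ¬p ∣ g) :
    ∃ x ∈ T, 0 < v x (algebraMap A K p) ∧ 0 < v x f := by
  by_contra! hcon
  obtain ⟨a, ha, hEq⟩ := hh_mem
  obtain ⟨h', rfl⟩ := hph
  have hh' : h' ≠ 0 := right_ne_zero_of_mul hh
  have hφ : ∀ {q : A}, q ≠ 0 → algebraMap A K q ≠ 0 :=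
    fun hq ↦ (map_ne_zero_iff _ halg).2 hq
  have ha0 : a ≠ 0 := by
    rintro rfl
    exact hφ hh (by rw [hEq, mul_zero])
  have hA : ∀ x ∈ T, ∀ q : A, 0 ≤ v x (algebraMap A K q) :=
    fun x hx q ↦ (hO _).1 (O.algebraMap_mem q) x hx
  set b := a / algebraMap A K p
  have hab : b * algebraMap A K p = a := div_mul_cancel₀ a (hφ hp.ne_zero)
  have hb0 : b ≠ 0 := div_ne_zero ha0 (hφ hp.ne_zero)
  have hbO : b ∈ O := by
    refine mem_of_mul_algebraMap_mem hmul hO hb0 (hφ hp.ne_zero) (hab ▸ ha) fun x hx hvp ↦ ?_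
    have hvg : v x (algebraMap A K g) = 0 := val_algebraMap_eq_zero_of_isCoprime (hmul x)
      (hadd x) (hA x hx) (hp.coprime_iff_not_dvd.2 hpg) hvp
    have hval : v x (algebraMap A K p) + v x (algebraMap A K h') =
        v x f + v x (algebraMap A K g) + (v x b + v x (algebraMap A K p)) := by
      rw [← hmul x _ _ (hφ hp.ne_zero) (hφ hh'), ← map_mul, hEq, ← hab,
        hmul x _ _ (mul_ne_zero hf (hφ hg)) (mul_ne_zero hb0 (hφ hp.ne_zero)),
        hmul x _ _ hf (hφ hg), hmul x _ _ hb0 (hφ hp.ne_zero)]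
    linarith [hcon x hx hvp, hA x hx h']
  have hh'_mem : algebraMap A K h' = f * algebraMap A K g * b := by
    apply mul_left_cancel₀ (hφ hp.ne_zero)
    rw [← map_mul, hEq, ← hab]
    ring
  exact not_mul_dvd_self hp hh' (hh_gen h' ⟨b, hbO, hh'_mem⟩)

end Denominator

/-- Closed points of `X` are modelled by `Pt` with valuations `v x` on `K`; the finite closed
point of `P¹` cut out by an irreducible `p ∈ k[t]` lies under `x` exactly when `v x p > 0`. -/
theorem statement9_general {k K : Type*} [Field k] [Field K] [Algebra (Polynomial k) K]
    (halg : Function.Injective (algebraMap (Polynomial k) K))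
    (Pt : Type*) (v : Pt → K → ℤ)
    (hv_mul : ∀ x (a b : K), a ≠ 0 → b ≠ 0 → v x (a * b) = v x a + v x b)
    (hv_add : ∀ x (a b : K), a ≠ 0 → b ≠ 0 → a + b ≠ 0 → min (v x a) (v x b) ≤ v x (a + b))
    (hO0 : ∀ a : K, a ∈ integralClosure (Polynomial k) K ↔
      ∀ x, 0 ≤ v x (algebraMap (Polynomial k) K Polynomial.X) → 0 ≤ v x a)
    (f : K) (hf : f ≠ 0)
    (g : Polynomial k) (hg : g ≠ 0)
    (hfg : f * algebraMap (Polynomial k) K g ∈ integralClosure (Polynomial k) K)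
    (hg_min : ∀ g' : Polynomial k, g' ≠ 0 →
      f * algebraMap (Polynomial k) K g' ∈ integralClosure (Polynomial k) K → g ∣ g')
    (h : Polynomial k) (hh : h ≠ 0)
    (hh_mem : ∃ a ∈ integralClosure (Polynomial k) K,
      algebraMap (Polynomial k) K h = f * algebraMap (Polynomial k) K g * a)
    (hh_gen : ∀ h' : Polynomial k,
      (∃ a ∈ integralClosure (Polynomial k) K,
        algebraMap (Polynomial k) K h' = f * algebraMap (Polynomial k) K g * a) → h ∣ h') :
    (∀ p : Polynomial k, Irreducible p → (p ∣ g ∨ p ∣ h) →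
        ∃ x, 0 < v x (algebraMap (Polynomial k) K p) ∧ v x f ≠ 0) ∧
      (∀ p : Polynomial k, Irreducible p → p ∣ g →
        ∃ x, 0 < v x (algebraMap (Polynomial k) K p) ∧ v x f < 0) ∧
      (∀ p : Polynomial k, Irreducible p → p ∣ h → ¬p ∣ g →
        ∃ x, 0 < v x (algebraMap (Polynomial k) K p) ∧ 0 < v x f) := by
  have pole : ∀ p, Irreducible p → p ∣ g →
      ∃ x, 0 < v x (algebraMap (Polynomial k) K p) ∧ v x f < 0 := fun p hp hpg ↦
    let ⟨x, _, hx⟩ := exists_val_neg_of_dvd_denominator halg hv_mul hO0 hf hg hfg hg_min hp hpg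
    ⟨x, hx⟩
  have zero : ∀ p, Irreducible p → p ∣ h → ¬p ∣ g →
      ∃ x, 0 < v x (algebraMap (Polynomial k) K p) ∧ 0 < v x f := fun p hp hph hpg ↦
    let ⟨x, _, hx⟩ := exists_val_pos_of_dvd_numerator halg hv_mul hv_add hO0 hf hg hh hh_mem
      hh_gen hp hph hpg
    ⟨x, hx⟩
  refine ⟨fun p hp hpgh ↦ ?_, pole, zero⟩
  by_cases hpg : p ∣ g
  · obtain ⟨x, hxp, hxf⟩ := pole p hp hpg
    exact ⟨x, hxp, hxf.ne⟩
  · obtain ⟨x, hxp, hxf⟩ := zero p hp (hpgh.resolve_left hpg) hpg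
    exact ⟨x, hxp, hxf.ne'⟩

/-- Let `f ∈ k(X)ˣ` be a nonzero function, let `g ∈ k[t]` be
the denominator of `f` with respect to `O_0` (the minimal nonzero polynomial
with `fg ∈ O_0`, where `O_0` is the integral closure of `k[t]` in the function
field `K = k(X)`), and let `h ∈ k[t]` be a generator of the ideal
`k[t] ∩ f g O_0`. Then every closed point `y` of `P¹` in the support of the
zero divisor of `g` or of the zero divisor of `h` satisfies `y = π(x)` for some
closed point `x ∈ X` in the support of `div(f)`; more precisely, if `y` is a
zero of `g` then there exists `x` above `y` with `v_x(f) < 0`, and if `y` is a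
zero of `h` but not of `g` then there exists `x` above `y` with `v_x(f) > 0`.

The closed points of `X` are abstracted as a type `Pt` carrying the normalized
valuations `v x` on `K`; the finite closed points of `P¹` are identified with
(associate classes of) irreducible polynomials `p ∈ k[t]`, and a point `x` lies
over the point cut out by `p` exactly when `v x p > 0`; membership of that
point in the support of the zero divisor of `g` is divisibility `p ∣ g`. -/
theorem statement9 {k K : Type*} [Field k] [Field K] [Algebra (Polynomial k) K]
    (halg : Function.Injective (algebraMap (Polynomial k) K))
    (Pt : Type*) (v : Pt → K → ℤ)
    (hv_mul : ∀ x (a b : K), a ≠ 0 → b ≠ 0 → v x (a * b) = v x a + v x b)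
    (hv_add : ∀ x (a b : K), a ≠ 0 → b ≠ 0 → a + b ≠ 0 → min (v x a) (v x b) ≤ v x (a + b))
    (hv_const : ∀ x (c : k), c ≠ 0 → v x (algebraMap (Polynomial k) K (Polynomial.C c)) = 0)
    (hv_finite : ∀ a : K, a ≠ 0 → {x | v x a ≠ 0}.Finite)
    (hO0 : ∀ a : K, a ∈ integralClosure (Polynomial k) K ↔
      ∀ x, 0 ≤ v x (algebraMap (Polynomial k) K Polynomial.X) → 0 ≤ v x a)
    (hπ_surj : ∀ p : Polynomial k, Irreducible p →
      ∃ x, 0 < v x (algebraMap (Polynomial k) K p))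
    (f : K) (hf : f ≠ 0)
    (g : Polynomial k) (hg : g ≠ 0)
    (hfg : f * algebraMap (Polynomial k) K g ∈ integralClosure (Polynomial k) K)
    (hg_min : ∀ g' : Polynomial k, g' ≠ 0 →
      f * algebraMap (Polynomial k) K g' ∈ integralClosure (Polynomial k) K → g ∣ g')
    (h : Polynomial k) (hh : h ≠ 0)
    (hh_mem : ∃ a ∈ integralClosure (Polynomial k) K,
      algebraMap (Polynomial k) K h = f * algebraMap (Polynomial k) K g * a)
    (hh_gen : ∀ h' : Polynomial k,
      (∃ a ∈ integralClosure (Polynomial k) K,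
        algebraMap (Polynomial k) K h' = f * algebraMap (Polynomial k) K g * a) → h ∣ h') :
    (∀ p : Polynomial k, Irreducible p → (p ∣ g ∨ p ∣ h) →
        ∃ x, 0 < v x (algebraMap (Polynomial k) K p) ∧ v x f ≠ 0) ∧
      (∀ p : Polynomial k, Irreducible p → p ∣ g →
        ∃ x, 0 < v x (algebraMap (Polynomial k) K p) ∧ v x f < 0) ∧
      (∀ p : Polynomial k, Irreducible p → p ∣ h → ¬p ∣ g →
        ∃ x, 0 < v x (algebraMap (Polynomial k) K p) ∧ 0 < v x f) :=
  statement9_general halg Pt v hv_mul hv_add hO0 f hf g hg hfg hg_min h hh hh_mem hh_gen
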